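/- arXiv:2106.11191 — 3 statements merged into one kernel-verified Lean document; each statement's English description precedes it below -/
import Mathlib

section
/- Let S and T be nonempty strings over the same alphabet. If the infinite periodic sequences S^ω and T^ω are equal, then root(S) = root(T). -/
/-! The length of `root(S)` is the minimal period of `S^ω` under the shift: the minimal period
divides every period, in particular `|S|`, and a divisor `d` of `|S|` is a period of `S^ω` exactly
when `S` is a power of its length-`d` prefix. So `root(S)` is the first `p` letters of `S^ω`, where
`p` is the minimal period, and both `p` and those letters depend only on `S^ω`. -/

/-- `listPow S k` is the `k`-fold concatenation `S^k` of the string `S`. -/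
def listPow {α : Type*} (S : List α) : ℕ → List α
  | 0 => []
  | n + 1 => S ++ listPow S n

/-- A string is primitive if `S = R^k` implies `S = R` and `k = 1`. -/
def IsPrimitiveStr {α : Type*} (S : List α) : Prop :=
  S ≠ [] ∧ ∀ (R : List α) (k : ℕ), S = listPow R k → S = R ∧ k = 1

/-- The length of the primitive root of `S`: the least positive `d` such that
`S` is the `(|S|/d)`-th power of its length-`d` prefix. -/
noncomputable def rootLen {α : Type*} (S : List α) : ℕ :=
  sInf {d | 0 < d ∧ listPow (S.take d) (S.length / d) = S}

/-- The primitive root of a (nonempty) string `S`. -/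
noncomputable def listRoot {α : Type*} (S : List α) : List α := S.take (rootLen S)

/-- `omegaSeq S hS` is the infinite sequence `S^ω` obtained by repeating the
nonempty string `S` forever; `omegaSeq S hS n = S[(n mod |S|) + 1]` (1-based). -/
def omegaSeq {α : Type*} (S : List α) (hS : S ≠ []) (n : ℕ) : α :=
  S.get ⟨n % S.length, Nat.mod_lt n (List.length_pos_iff.mpr hS)⟩

/-- Lexicographic order on infinite sequences: they differ somewhere and at the
first differing position the left one is smaller. -/
def SeqLexLt {α : Type*} [LinearOrder α] (f g : ℕ → α) : Prop :=
  ∃ n, (∀ m, m < n → f m = g m) ∧ f n < g n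

/-- The ω-order on nonempty strings: `S ≺_ω T` iff either `root S = root T` and
`|S| < |T|`, or `S^ω <_lex T^ω`. -/
def OmegaLt {α : Type*} [LinearOrder α] (S T : List α) : Prop :=
  ∃ (hS : S ≠ []) (hT : T ≠ []),
    (listRoot S = listRoot T ∧ S.length < T.length) ∨
      SeqLexLt (omegaSeq S hS) (omegaSeq T hT)

/-- `conj T i = T[i..n]T[1..i-1]`, the `i`-th rotation (conjugate) of `T`
(1-based index, taken cyclically). -/
def conj {α : Type*} (T : List α) (i : ℕ) : List α := T.rotate (i - 1)

theorem conj_ne_nil {α : Type*} {T : List α} (hT : T ≠ []) (i : ℕ) : conj T i ≠ [] := by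
  intro h
  apply hT
  have h' := congrArg List.length h
  simp only [conj, List.length_rotate, List.length_nil] at h'
  exact List.length_eq_zero_iff.mp h'

theorem listPow_ne_nil {α : Type*} {S : List α} (hS : S ≠ []) {r : ℕ} (hr : 1 ≤ r) :
    listPow S r ≠ [] := by
  cases r with
  | zero => omega
  | succ n =>
    intro h
    exact hS (List.append_eq_nil_iff.mp h).1

/-- Lexicographic order on finite strings. -/
def LexLt {α : Type*} [LinearOrder α] (U V : List α) : Prop := List.Lex (· < ·) U V

/-- Position `i` of `T` is cyclic S-type if `conj_i(T) <_lex conj_{i+1}(T)`. -/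
def SType {α : Type*} [LinearOrder α] (T : List α) (i : ℕ) : Prop :=
  LexLt (conj T i) (conj T (i + 1))

/-- Position `i` of `T` is cyclic L-type if `conj_i(T) >_lex conj_{i+1}(T)`. -/
def LType {α : Type*} [LinearOrder α] (T : List α) (i : ℕ) : Prop :=
  LexLt (conj T (i + 1)) (conj T i)

/-- `cyc T hT i` is the character `T[i]`, 1-based and taken cyclically. -/
def cyc {α : Type*} (T : List α) (hT : T ≠ []) (i : ℕ) : α := omegaSeq T hT (i - 1)

/-- A cyclic S-type position `i` is LMS if position `i-1` (cyclically, so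
position `0` means `n`) is cyclic L-type. -/
def IsLMS {α : Type*} [LinearOrder α] (T : List α) (i : ℕ) : Prop :=
  SType T i ∧ LType T (if i = 1 then T.length else i - 1)

/-- The cyclic distance from position `i` to the first LMS position of `T`
strictly after `i` (in cyclic order). -/
noncomputable def lmsDist {α : Type*} [LinearOrder α] (T : List α) (i : ℕ) : ℕ :=
  sInf {m | 0 < m ∧ IsLMS T ((i + m - 1) % T.length + 1)}

/-- The LMS-prefix of `conj_i(T)`: the cyclic factor of `T` from position `i`
to the first LMS position strictly after `i`, inclusive at both ends. -/
noncomputable def lmsPrefix {α : Type*} [LinearOrder α] (T : List α) (i : ℕ) : List α :=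
  (conj T i ++ conj T i).take (lmsDist T i + 1)

/-- The LMS-order: `U <_LMS V` iff `V` is a proper prefix of `U`, or neither is
a prefix of the other and `U <_lex V`. -/
def LMSLt {α : Type*} [LinearOrder α] (U V : List α) : Prop :=
  (V <+: U ∧ V ≠ U) ∨ (¬ U <+: V ∧ ¬ V <+: U ∧ LexLt U V)

open Function

namespace Stream'

variable {α : Type*}

theorem iterate_tail_eq_drop (s : Stream' α) (n : ℕ) : tail^[n] s = s.drop n := by
  induction n generalizing s with
  | zero => rfl
  | succ n ih => rw [iterate_succ_apply, ih, drop_succ]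

theorem isPeriodicPt_tail_iff {s : ℕ → α} {n : ℕ} :
    IsPeriodicPt tail n s ↔ Periodic s n := by
  change tail^[n] s = s ↔ _
  rw [show tail^[n] s = drop n s from iterate_tail_eq_drop s n]
  exact ⟨congrFun, funext⟩

end Stream'

section Words

variable {α : Type*}

theorem omegaSeq_of_lt {S : List α} (hS : S ≠ []) {n : ℕ} (hn : n < S.length) :
    omegaSeq S hS n = S[n] := by
  simp [omegaSeq, Nat.mod_eq_of_lt hn]

theorem periodic_omegaSeq (S : List α) (hS : S ≠ []) : Periodic (omegaSeq S hS) S.length := by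
  intro n
  simp [omegaSeq]

theorem length_listPow (R : List α) (k : ℕ) : (listPow R k).length = k * R.length := by
  induction k with
  | zero => simp [listPow]
  | succ k ih => simp [listPow, ih, Nat.succ_mul, Nat.add_comm]

theorem getElem_listPow {R : List α} {k m : ℕ} (hm : m < (listPow R k).length) :
    (listPow R k)[m] = R[m % R.length]'(Nat.mod_lt _ (by
      rw [length_listPow] at hm; exact Nat.pos_of_mul_pos_left (Nat.zero_lt_of_lt hm))) := by
  induction k generalizing m with
  | zero => simp [listPow] at hm
  | succ k ih =>
    simp only [listPow, List.getElem_append]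
    split_ifs with h
    · simp [Nat.mod_eq_of_lt h]
    · have hRm : R.length ≤ m := Nat.le_of_not_lt h
      rw [ih]
      congr 1
      rw [← Nat.sub_add_cancel hRm, Nat.add_mod_right, Nat.sub_add_cancel hRm]

theorem omegaSeq_eq_getElem_mod_of_listPow_eq {S R : List α} {k : ℕ} (hS : S ≠ [])
    (h : listPow R k = S) (n : ℕ) :
    omegaSeq S hS n = R[n % R.length]'(Nat.mod_lt _ (Nat.pos_of_mul_pos_left (a := k) (by
      rw [← length_listPow, h]; exact List.length_pos_iff.mpr hS))) := by
  subst h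
  simp only [omegaSeq, List.get_eq_getElem, getElem_listPow, length_listPow, Nat.mod_mul_left_mod]

theorem periodic_omegaSeq_of_listPow_eq {S R : List α} {k : ℕ} (hS : S ≠ [])
    (h : listPow R k = S) : Periodic (omegaSeq S hS) R.length := by
  intro n
  simp only [omegaSeq_eq_getElem_mod_of_listPow_eq hS h, Nat.add_mod_right]

theorem listPow_take_eq_iff {S : List α} (hS : S ≠ []) {d : ℕ} :
    listPow (S.take d) (S.length / d) = S ↔ d ∣ S.length ∧ Periodic (omegaSeq S hS) d := by
  constructor
  · intro hpow
    have hdS : d ≤ S.length := by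
      by_contra! hlt
      rw [Nat.div_eq_of_lt hlt] at hpow
      exact hS hpow.symm
    have hlen : (S.take d).length = d := List.length_take_of_le hdS
    refine ⟨Dvd.intro_left (S.length / d) ?_, hlen ▸ periodic_omegaSeq_of_listPow_eq hS hpow⟩
    simpa only [length_listPow, hlen] using congrArg List.length hpow
  · rintro ⟨hdvd, hper⟩
    have hlen : (S.take d).length = d :=
      List.length_take_of_le (Nat.le_of_dvd (List.length_pos_iff.mpr hS) hdvd)
    apply List.ext_getElem (by rw [length_listPow, hlen, Nat.div_mul_cancel hdvd])
    intro m _ hm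
    simp only [getElem_listPow, hlen, List.getElem_take]
    rw [← omegaSeq_of_lt hS, ← omegaSeq_of_lt hS hm, hper.map_mod_nat]

theorem rootLen_eq_minimalPeriod (S : List α) (hS : S ≠ []) :
    rootLen S = minimalPeriod Stream'.tail (omegaSeq S hS) := by
  have hlen : IsPeriodicPt Stream'.tail S.length (omegaSeq S hS) :=
    Stream'.isPeriodicPt_tail_iff.mpr (periodic_omegaSeq S hS)
  have hp0 := hlen.minimalPeriod_pos (List.length_pos_iff.mpr hS)
  have hp : minimalPeriod Stream'.tail (omegaSeq S hS) ∈
      {d | 0 < d ∧ listPow (S.take d) (S.length / d) = S} :=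
    ⟨hp0, (listPow_take_eq_iff hS).mpr ⟨hlen.minimalPeriod_dvd,
      Stream'.isPeriodicPt_tail_iff.mp (isPeriodicPt_minimalPeriod _ _)⟩⟩
  obtain ⟨hr0, hr⟩ : rootLen S ∈ {d | 0 < d ∧ listPow (S.take d) (S.length / d) = S} :=
    Nat.sInf_mem ⟨_, hp⟩
  refine le_antisymm (Nat.sInf_le hp) (IsPeriodicPt.minimalPeriod_le hr0 ?_)
  exact Stream'.isPeriodicPt_tail_iff.mpr ((listPow_take_eq_iff hS).mp hr).2

theorem listRoot_eq_ofFn (S : List α) (hS : S ≠ []) :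
    listRoot S = List.ofFn fun i : Fin (minimalPeriod Stream'.tail (omegaSeq S hS)) =>
      omegaSeq S hS i := by
  have hle : minimalPeriod Stream'.tail (omegaSeq S hS) ≤ S.length :=
    Nat.le_of_dvd (List.length_pos_iff.mpr hS)
      (Stream'.isPeriodicPt_tail_iff.mpr (periodic_omegaSeq S hS)).minimalPeriod_dvd
  rw [listRoot, rootLen_eq_minimalPeriod S hS]
  apply List.ext_getElem (by simp [hle])
  intro i _ hi
  simp only [List.getElem_take, List.getElem_ofFn]
  rw [omegaSeq_of_lt hS (by simp at hi; omega)]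

end Words

/-- If the infinite periodic sequences `S^ω` and `T^ω` of two
nonempty strings are equal, then `root(S) = root(T)`. -/
theorem root_eq_of_omegaSeq_eq {α : Type*} (S T : List α) (hS : S ≠ []) (hT : T ≠ [])
    (h : omegaSeq S hS = omegaSeq T hT) : listRoot S = listRoot T := by
  rw [listRoot_eq_ofFn S hS, listRoot_eq_ofFn T hT, h]
end

section
/- Let T be a primitive string of length n ≥ 2, viewed cyclically, and let 1 ≤ i ≤ n. Let ℓ be the smallest positive integer such that T[i+ℓ] ≠ T[i] (indices cyclic; such ℓ exists since T is primitive of length ≥ 2), and let i' = i + ℓ. Then position i is cyclic S-type if and only if T[i'] > T[i]. -/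
/-
Cyclic S-type is decided by the first position where `conj_i(T)` and `conj_{i+1}(T)` differ.
Both conjugates begin with a run of the letter `T[i]`, of lengths `ℓ` and `ℓ - 1`, so they agree
on their first `ℓ - 1` letters, and at position `ℓ - 1` (0-based) they read `T[i]` and `T[i+ℓ]`.
This position lies inside the strings because `T[i+n] = T[i]` forces `ℓ ≤ n`.
-/

theorem List.lt_iff_getElem_lt_of_getElem_eq {α : Type*} [Preorder α] {l₁ l₂ : List α}
    {k : ℕ} (h₁ : k < l₁.length) (h₂ : k < l₂.length) (heq : ∀ j (hj : j < k), l₁[j] = l₂[j])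
    (hne : l₁[k] ≠ l₂[k]) : l₁ < l₂ ↔ l₁[k] < l₂[k] := by
  refine ⟨fun hlt => ?_, fun hlt => List.lt_iff_exists.mpr (.inr ⟨k, h₁, h₂, heq, hlt⟩)⟩
  rcases List.lt_iff_exists.mp hlt with ⟨hpre, -⟩ | ⟨i, hi₁, hi₂, heq', hlt'⟩
  · exact absurd (by simp [List.getElem_of_eq hpre h₁]) hne
  · rcases lt_trichotomy i k with hik | rfl | hki
    · exact absurd (heq i hik) hlt'.ne
    · exact hlt'
    · exact absurd (heq' k hki) hne

section Cyclic

variable {α : Type*} {T : List α}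

@[simp]
theorem length_conj (T : List α) (i : ℕ) : (conj T i).length = T.length :=
  List.length_rotate ..

theorem getElem_conj (hT : T ≠ []) {i k : ℕ} (hi : 1 ≤ i) (hk : k < (conj T i).length) :
    (conj T i)[k] = cyc T hT (i + k) := by
  simp only [conj, List.getElem_rotate, cyc, omegaSeq, List.get_eq_getElem]
  congr 2
  omega

theorem cyc_add_length (hT : T ≠ []) {j : ℕ} (hj : 1 ≤ j) :
    cyc T hT (j + T.length) = cyc T hT j := by
  simp only [cyc, omegaSeq, List.get_eq_getElem, show j + T.length - 1 = j - 1 + T.length by omega,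
    Nat.add_mod_right]

theorem le_length_of_cyc_run (hT : T ≠ []) {i ℓ : ℕ} (hi : 1 ≤ i)
    (hne : cyc T hT (i + ℓ) ≠ cyc T hT i) (hrun : ∀ m < ℓ, cyc T hT (i + m) = cyc T hT i) :
    ℓ ≤ T.length := by
  by_contra! h
  have := List.length_pos_iff.mpr hT
  apply hne
  rw [show i + ℓ = i + (ℓ - T.length) + T.length by omega, cyc_add_length hT (by omega)]
  exact hrun _ (by omega)

end Cyclic

theorem sType_iff_next_diff_char_gt_general {α : Type*} [LinearOrder α] (T : List α)
    (hT : IsPrimitiveStr T)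
    (i : ℕ) (hi1 : 1 ≤ i)
    (ℓ : ℕ) (hℓ : 0 < ℓ)
    (hne : cyc T hT.1 (i + ℓ) ≠ cyc T hT.1 i)
    (hmin : ∀ m, 0 < m → m < ℓ → cyc T hT.1 (i + m) = cyc T hT.1 i) :
    SType T i ↔ cyc T hT.1 i < cyc T hT.1 (i + ℓ) := by
  have hrun : ∀ m < ℓ, cyc T hT.1 (i + m) = cyc T hT.1 i := fun m hm =>
    m.eq_zero_or_pos.elim (fun h => by rw [h, Nat.add_zero]) (hmin m · hm)
  have hℓn : ℓ ≤ T.length := le_length_of_cyc_run hT.1 hi1 hne hrun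
  have hcur (k) (hk : k < (conj T i).length) : (conj T i)[k] = cyc T hT.1 (i + k) :=
    getElem_conj hT.1 hi1 hk
  have hnext (k) (hk : k < (conj T (i + 1)).length) :
      (conj T (i + 1))[k] = cyc T hT.1 (i + (k + 1)) := by
    rw [getElem_conj hT.1 (by omega), Nat.add_right_comm, Nat.add_assoc]
  have hlast : (conj T (i + 1))[ℓ - 1]'(by simp; omega) = cyc T hT.1 (i + ℓ) := by
    rw [hnext, Nat.sub_add_cancel hℓ]
  have hagree (j) (hj : j < ℓ - 1) (h₁ h₂) : (conj T i)[j]'h₁ = (conj T (i + 1))[j]'h₂ := by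
    rw [hcur, hnext, hrun j (by omega), hrun (j + 1) (by omega)]
  have hfirst : (conj T i)[ℓ - 1]'(by simp; omega) = cyc T hT.1 i := by
    rw [hcur, hrun _ (by omega)]
  change conj T i < conj T (i + 1) ↔ _
  have hdiff : (conj T i)[ℓ - 1]'(by simp; omega) ≠ (conj T (i + 1))[ℓ - 1]'(by simp; omega) := by
    rw [hfirst, hlast]
    exact hne.symm
  rw [List.lt_iff_getElem_lt_of_getElem_eq _ _ (fun j hj => hagree j hj _ _) hdiff, hfirst, hlast]

/-- For a primitive string `T` of length `n ≥ 2` (viewed cyclically),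
`1 ≤ i ≤ n`, and `ℓ` the smallest positive integer with `T[i+ℓ] ≠ T[i]`
(indices cyclic), position `i` is cyclic S-type iff `T[i+ℓ] > T[i]`. -/
theorem sType_iff_next_diff_char_gt {α : Type*} [LinearOrder α] (T : List α)
    (hT : IsPrimitiveStr T) (h2 : 2 ≤ T.length)
    (i : ℕ) (hi1 : 1 ≤ i) (hi2 : i ≤ T.length)
    (ℓ : ℕ) (hℓ : 0 < ℓ)
    (hne : cyc T hT.1 (i + ℓ) ≠ cyc T hT.1 i)
    (hmin : ∀ m, 0 < m → m < ℓ → cyc T hT.1 (i + m) = cyc T hT.1 i) :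
    SType T i ↔ cyc T hT.1 i < cyc T hT.1 (i + ℓ) :=
  sType_iff_next_diff_char_gt_general T hT i hi1 ℓ hℓ hne hmin
end

section
/- Let A and B be primitive strings of length ≥ 2 over a linearly ordered alphabet, let 1 ≤ i ≤ |A| and 1 ≤ j ≤ |B|, let U be the LMS-prefix of conj_i(A) and V the LMS-prefix of conj_j(B). If U <_LMS V, then conj_i(A) ≺_ω conj_j(B). -/
/-!
Compare the conjugates through their infinite powers `f = conj_i(A)^ω` and `g = conj_j(B)^ω`,
in which the cyclic S/L-type of a position is the lexicographic comparison of consecutive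
suffixes. If `U` and `V` are not prefixes of each other, the first mismatch witnessing
`U <_lex V` is already a first mismatch of `f` and `g`. Otherwise `V = g[0..d+1]` is a proper
prefix of `U`, so `f` and `g` agree up to `d + 1`, where `g` has an LMS position and `f` does
not. From `g(d) > g(d+1)` the position `d` is L-type in `f` too, so `d + 1` is L-type in `f`:
the suffix of `f` at `d + 1` lies below the constant word `f(d+1)^ω`, whereas the S-type
suffix of `g` there lies above it.
-/

section Sequences

variable {α : Type*}

def seqShift (f : ℕ → α) (m : ℕ) : ℕ → α := fun t => f (t + m)

@[simp]
theorem seqShift_apply (f : ℕ → α) (m t : ℕ) : seqShift f m t = f (t + m) := rfl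

@[simp]
theorem seqShift_seqShift (f : ℕ → α) (a b : ℕ) :
    seqShift (seqShift f a) b = seqShift f (a + b) := by
  funext t; simp only [seqShift_apply]; ring_nf

theorem eq_of_run {f : ℕ → α} {m n : ℕ} (hrun : ∀ k < n, f (k + (m + 1)) = f (k + m)) :
    ∀ k ≤ n, f (k + m) = f m := by
  intro k hk
  induction k with
  | zero => simp
  | succ k ih => rw [show k + 1 + m = k + (m + 1) by omega, hrun k (by omega), ih (by omega)]

variable [LinearOrder α]

theorem seqLexLt_iff_toLex_lt {f g : ℕ → α} : SeqLexLt f g ↔ toLex f < toLex g := Iff.rfl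

theorem toLex_lt_iff_head {f g : ℕ → α} :
    toLex f < toLex g ↔
      f 0 < g 0 ∨ f 0 = g 0 ∧ toLex (seqShift f 1) < toLex (seqShift g 1) := by
  constructor
  · rintro ⟨n, hagree, hlt⟩
    cases n with
    | zero => exact Or.inl hlt
    | succ n =>
      exact Or.inr ⟨hagree 0 n.succ_pos, n, fun k hk => hagree (k + 1) (by omega), hlt⟩
  · rintro (hlt | ⟨h0, n, hagree, hlt⟩)
    · exact ⟨0, fun k hk => absurd hk k.not_lt_zero, hlt⟩
    · refine ⟨n + 1, fun k hk => ?_, hlt⟩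
      cases k with
      | zero => exact h0
      | succ k => exact hagree k (by omega)

theorem toLex_lt_of_eqOn_of_seqShift_lt {f g : ℕ → α} {m : ℕ} (hfg : ∀ t < m, f t = g t)
    (h : toLex (seqShift f m) < toLex (seqShift g m)) : toLex f < toLex g := by
  obtain ⟨n, hagree, hlt⟩ := h
  refine ⟨n + m, fun k hk => ?_, hlt⟩
  rcases lt_or_ge k m with hkm | hkm
  · exact hfg k hkm
  · simpa [Nat.sub_add_cancel hkm] using hagree (k - m) (by omega)

/-- Cyclic types of positions read off an infinite word; for `f = T^ω` these are the cyclic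
S- and L-types of `T`. -/
def SeqSType (f : ℕ → α) (m : ℕ) : Prop := toLex (seqShift f m) < toLex (seqShift f (m + 1))

def SeqLType (f : ℕ → α) (m : ℕ) : Prop := toLex (seqShift f (m + 1)) < toLex (seqShift f m)

theorem seqLType_iff {f : ℕ → α} {m : ℕ} :
    SeqLType f m ↔ f (m + 1) < f m ∨ f (m + 1) = f m ∧ SeqLType f (m + 1) := by
  simp [SeqLType, toLex_lt_iff_head (f := seqShift f (m + 1))]

theorem lt_of_seqLType_of_seqSType {f : ℕ → α} {m : ℕ} (hL : SeqLType f m)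
    (hS : SeqSType f (m + 1)) : f (m + 1) < f m :=
  (seqLType_iff.1 hL).resolve_right fun h => lt_asymm hS h.2

theorem SeqLType.toLex_lt_const {f : ℕ → α} {m : ℕ} (h : SeqLType f m) :
    toLex (seqShift f m) < toLex (fun _ => f m) := by
  obtain ⟨n, hrun, hlt⟩ := h
  have hconst := eq_of_run fun k hk => by simpa using hrun k hk
  refine ⟨n + 1, fun k hk => hconst k (by omega), ?_⟩
  simp only [Pi.toLex_apply, seqShift_apply] at hlt ⊢
  rwa [show n + 1 + m = n + (m + 1) by omega, ← hconst n le_rfl]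

theorem SeqSType.const_lt_toLex {f : ℕ → α} {m : ℕ} (h : SeqSType f m) :
    toLex (fun _ => f m) < toLex (seqShift f m) := by
  obtain ⟨n, hrun, hlt⟩ := h
  have hconst := eq_of_run fun k hk => by simpa using (hrun k hk).symm
  refine ⟨n + 1, fun k hk => (hconst k (by omega)).symm, ?_⟩
  simp only [Pi.toLex_apply, seqShift_apply] at hlt ⊢
  rwa [show n + 1 + m = n + (m + 1) by omega, ← hconst n le_rfl]

theorem toLex_lt_of_lms {f g : ℕ → α} {d : ℕ} (hfg : ∀ t ≤ d + 1, f t = g t)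
    (hg : SeqLType g d ∧ SeqSType g (d + 1)) (hf : ¬ (SeqLType f d ∧ SeqSType f (d + 1)))
    (hf_ne : seqShift f (d + 1) ≠ seqShift f (d + 2)) : toLex f < toLex g := by
  have hgd : g (d + 1) < g d := lt_of_seqLType_of_seqSType hg.1 hg.2
  have hfL : SeqLType f d :=
    seqLType_iff.2 (Or.inl (by rwa [hfg d (by omega), hfg (d + 1) le_rfl]))
  have hfL' : SeqLType f (d + 1) :=
    (lt_or_gt_of_ne (toLex.injective.ne hf_ne)).resolve_left fun hS => hf ⟨hfL, hS⟩
  refine toLex_lt_of_eqOn_of_seqShift_lt (m := d + 1) (fun t ht => hfg t ht.le) ?_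
  calc toLex (seqShift f (d + 1)) < toLex (fun _ => f (d + 1)) := hfL'.toLex_lt_const
    _ = toLex (fun _ => g (d + 1)) := by rw [hfg (d + 1) le_rfl]
    _ < toLex (seqShift g (d + 1)) := hg.2.const_lt_toLex

theorem exists_not_lt_succ_of_periodic {β : Type*} [Preorder β] {x : ℕ → β} {p : ℕ}
    (hp : 0 < p) (hx : x p = x 0) : ∃ k, ¬ x k < x (k + 1) := by
  by_contra! h
  exact (strictMono_nat_of_lt_succ h hp).ne hx.symm

theorem exists_seqLType_seqSType {f : ℕ → α} {p : ℕ} (hp : 0 < p)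
    (hper : ∀ a, seqShift f (a + p) = seqShift f a)
    (hne : ∀ m, seqShift f m ≠ seqShift f (m + 1)) :
    ∃ d, SeqLType f d ∧ SeqSType f (d + 1) := by
  have htype (m : ℕ) : SeqSType f m ∨ SeqLType f m :=
    lt_or_gt_of_ne (toLex.injective.ne (hne m))
  have hL : ∀ a, ∃ k, SeqLType f (a + k) := fun a => by
    obtain ⟨k, hk⟩ := exists_not_lt_succ_of_periodic
      (x := fun k => toLex (seqShift f (a + k))) hp (by simp [hper])
    exact ⟨k, (htype _).resolve_left hk⟩
  have hS : ∀ a, ∃ k, SeqSType f (a + k) := fun a => by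
    obtain ⟨k, hk⟩ := exists_not_lt_succ_of_periodic
      (x := fun k => OrderDual.toDual (toLex (seqShift f (a + k)))) hp (by simp [hper])
    exact ⟨k, (htype _).resolve_right hk⟩
  obtain ⟨l, hl⟩ : ∃ l, SeqLType f l := by simpa using hL 0
  obtain ⟨k, hk, hk'⟩ := Nat.exists_not_and_succ_of_not_zero_of_exists
    (p := fun k => SeqSType f (l + k)) (fun h => lt_asymm h hl) (hS l)
  exact ⟨l + k, (htype _).resolve_left hk, hk'⟩

end Sequences

section Words

variable {α : Type*}

theorem omegaSeq_of_lt_s14 {T : List α} (hT : T ≠ []) {k : ℕ} (hk : k < T.length) :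
    omegaSeq T hT k = T[k] := by
  simp [omegaSeq, Nat.mod_eq_of_lt hk]

theorem omegaSeq_rotate {T : List α} (hT : T ≠ []) (r : ℕ) :
    omegaSeq (T.rotate r) (by simpa using hT) = seqShift (omegaSeq T hT) r := by
  funext t
  simp [omegaSeq, List.getElem_rotate, Nat.mod_add_mod]

theorem seqShift_omegaSeq_of_modEq {T : List α} (hT : T ≠ []) {u v : ℕ}
    (h : u ≡ v [MOD T.length]) : seqShift (omegaSeq T hT) u = seqShift (omegaSeq T hT) v := by
  funext t
  simp only [seqShift_apply, omegaSeq, List.get_eq_getElem]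
  congr 1
  exact h.add_left t

theorem getElem_take_append_self {T : List α} (hT : T ≠ []) {m k : ℕ}
    (hk : k < ((T ++ T).take m).length) : ((T ++ T).take m)[k] = omegaSeq T hT k := by
  have hk' : k < T.length + T.length := by simp at hk; omega
  rw [List.getElem_take, List.getElem_append]
  split_ifs with h
  · exact (omegaSeq_of_lt_s14 hT h).symm
  · rw [← omegaSeq_of_lt_s14 hT (by omega : k - T.length < T.length)]
    simp [omegaSeq, Nat.mod_eq_sub_mod (Nat.le_of_not_lt h)]

theorem listPow_singleton (c : α) (n : ℕ) : listPow [c] n = List.replicate n c := by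
  induction n with
  | zero => rfl
  | succ n ih => simp [listPow, ih, List.replicate_succ]

theorem IsPrimitiveStr.ne_replicate {T : List α} (hT : IsPrimitiveStr T) (hT2 : 2 ≤ T.length)
    (c : α) : T ≠ List.replicate T.length c := fun h => by
  have := (hT.2 [c] T.length (by rwa [listPow_singleton])).2
  omega

theorem IsPrimitiveStr.seqShift_omegaSeq_ne {T : List α} (hT : IsPrimitiveStr T)
    (hT2 : 2 ≤ T.length) (m : ℕ) :
    seqShift (omegaSeq T hT.1) m ≠ seqShift (omegaSeq T hT.1) (m + 1) := fun h => by
  set f := omegaSeq T hT.1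
  have hrun : ∀ t, f (t + m) = f m :=
    fun t => eq_of_run (fun k _ => (congrFun h k).symm) t le_rfl
  refine hT.ne_replicate hT2 (f m) (List.eq_replicate_iff.2 ⟨rfl, fun x hx => ?_⟩)
  obtain ⟨k, hk, rfl⟩ := List.getElem_of_mem hx
  -- `f` has period `|T|`, and is constant from `m` on
  have hper : f (k + m * T.length) = f k := by
    simp [f, omegaSeq, Nat.add_mul_mod_self_right]
  rw [← omegaSeq_of_lt_s14 hT.1 hk]
  change f k = f m
  rw [← hper, ← hrun (k + m * T.length - m),
    Nat.sub_add_cancel (by nlinarith)]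

variable [LinearOrder α]

theorem toLex_lt_of_lt_of_not_prefix {U V : List α} {f g : ℕ → α}
    (hU : ∀ k (hk : k < U.length), U[k] = f k) (hV : ∀ k (hk : k < V.length), V[k] = g k)
    (hlt : U < V) (hpre : ¬ U <+: V) : toLex f < toLex g := by
  rcases List.lt_iff_exists.1 hlt with ⟨hUV, -⟩ | ⟨k, hkU, hkV, hagree, hk⟩
  · exact absurd (hUV ▸ List.take_prefix _ _) hpre
  · refine ⟨k, fun j hj => ?_, ?_⟩
    · simpa [hU, hV] using hagree j hj
    · simpa [hU, hV] using hk

theorem lexLt_iff_toLex_omegaSeq_lt {x y : List α} (hx : x ≠ []) (hy : y ≠ [])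
    (hlen : x.length = y.length) :
    LexLt x y ↔ toLex (omegaSeq x hx) < toLex (omegaSeq y hy) := by
  have hx' (k : ℕ) (hk : k < x.length) := (omegaSeq_of_lt_s14 hx hk).symm
  have hy' (k : ℕ) (hk : k < y.length) := (omegaSeq_of_lt_s14 hy hk).symm
  constructor
  · intro h
    exact toLex_lt_of_lt_of_not_prefix hx' hy' h
      fun hp => List.lt_irrefl y (hp.eq_of_length hlen ▸ h)
  · intro h
    by_contra hxy
    rcases List.le_iff_lt_or_eq.1 (List.not_lt.1 hxy) with hyx | rfl
    · exact lt_asymm h (toLex_lt_of_lt_of_not_prefix hy' hx' hyx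
        fun hp => List.lt_irrefl x (hp.eq_of_length hlen.symm ▸ hyx))
    · exact lt_irrefl _ h

theorem lexLt_rotate_iff_of_modEq {T : List α} (hT : T ≠ []) {u v u' v' : ℕ}
    (hu : u ≡ u' [MOD T.length]) (hv : v ≡ v' [MOD T.length]) :
    LexLt (T.rotate u) (T.rotate v) ↔
      toLex (seqShift (omegaSeq T hT) u') < toLex (seqShift (omegaSeq T hT) v') := by
  rw [lexLt_iff_toLex_omegaSeq_lt (by simpa using hT) (by simpa using hT) (by simp),
    omegaSeq_rotate hT, omegaSeq_rotate hT, seqShift_omegaSeq_of_modEq hT hu,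
    seqShift_omegaSeq_of_modEq hT hv]

end Words

section LMS

variable {α : Type*}

theorem omegaSeq_conj {T : List α} (hT : T ≠ []) (i : ℕ) :
    omegaSeq (conj T i) (conj_ne_nil hT i) = seqShift (omegaSeq T hT) (i - 1) :=
  omegaSeq_rotate hT (i - 1)

theorem IsPrimitiveStr.seqShift_omegaSeq_conj_ne {T : List α} (hT : IsPrimitiveStr T)
    (hT2 : 2 ≤ T.length) (i m : ℕ) :
    seqShift (omegaSeq (conj T i) (conj_ne_nil hT.1 i)) m ≠
      seqShift (omegaSeq (conj T i) (conj_ne_nil hT.1 i)) (m + 1) := by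
  rw [omegaSeq_conj hT.1, seqShift_seqShift, seqShift_seqShift, ← add_assoc]
  exact hT.seqShift_omegaSeq_ne hT2 (i - 1 + m)

variable [LinearOrder α]

theorem isLMS_iff {T : List α} (hT : T ≠ []) (r : ℕ) :
    IsLMS T ((r + 1) % T.length + 1) ↔
      SeqLType (omegaSeq T hT) r ∧ SeqSType (omegaSeq T hT) (r + 1) := by
  have hn : 0 < T.length := List.length_pos_iff.2 hT
  have hmod : (r + 1) % T.length ≡ r + 1 [MOD T.length] := Nat.mod_modEq _ _
  set q := if (r + 1) % T.length + 1 = 1 then T.length else (r + 1) % T.length + 1 - 1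
  have hq : q ≡ r + 1 [MOD T.length] := by
    by_cases h : (r + 1) % T.length = 0
    · simp [q, h, Nat.ModEq]
    · simpa [q, h] using hmod
  have hq1 : 1 ≤ q := by
    by_cases h : (r + 1) % T.length = 0 <;> simp [q, h] <;> omega
  have hq' : q - 1 ≡ r [MOD T.length] :=
    Nat.ModEq.add_right_cancel' 1 (by rwa [Nat.sub_add_cancel hq1])
  unfold IsLMS SType LType conj SeqLType SeqSType
  rw [and_comm]
  refine and_congr ?_ ?_
  · exact lexLt_rotate_iff_of_modEq hT (by rwa [Nat.add_sub_cancel]) hq'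
  · exact lexLt_rotate_iff_of_modEq hT (by simpa using hmod) (by simpa using hmod.add_right 1)

theorem isLMS_conj_iff {T : List α} (hT : T ≠ []) {i : ℕ} (hi : 1 ≤ i) (d : ℕ) :
    IsLMS T ((i + (d + 1) - 1) % T.length + 1) ↔
      SeqLType (omegaSeq (conj T i) (conj_ne_nil hT i)) d ∧
        SeqSType (omegaSeq (conj T i) (conj_ne_nil hT i)) (d + 1) := by
  rw [show i + (d + 1) - 1 = i - 1 + d + 1 by omega, isLMS_iff hT, omegaSeq_conj hT]
  simp only [SeqLType, SeqSType, seqShift_seqShift, add_assoc]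

theorem exists_isLMS {T : List α} (hT : IsPrimitiveStr T) (hT2 : 2 ≤ T.length) {i : ℕ}
    (hi : 1 ≤ i) : ∃ m, 0 < m ∧ IsLMS T ((i + m - 1) % T.length + 1) := by
  obtain ⟨d, hd⟩ := exists_seqLType_seqSType (f := omegaSeq (conj T i) (conj_ne_nil hT.1 i))
    (p := T.length) (by omega)
    (fun a => by
      rw [omegaSeq_conj hT.1, seqShift_seqShift, seqShift_seqShift, ← add_assoc]
      exact seqShift_omegaSeq_of_modEq hT.1 Nat.add_modEq_right)
    (hT.seqShift_omegaSeq_conj_ne hT2 i)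
  exact ⟨d + 1, d.succ_pos, (isLMS_conj_iff hT.1 hi d).2 hd⟩

theorem exists_lmsDist_eq_succ {T : List α} (hT : IsPrimitiveStr T) (hT2 : 2 ≤ T.length)
    {i : ℕ} (hi : 1 ≤ i) :
    ∃ d, lmsDist T i = d + 1 ∧ SeqLType (omegaSeq (conj T i) (conj_ne_nil hT.1 i)) d ∧
      SeqSType (omegaSeq (conj T i) (conj_ne_nil hT.1 i)) (d + 1) := by
  obtain ⟨hpos, hlms⟩ : 0 < lmsDist T i ∧ IsLMS T ((i + lmsDist T i - 1) % T.length + 1) :=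
    Nat.sInf_mem (exists_isLMS hT hT2 hi)
  obtain ⟨d, hd⟩ : ∃ d, lmsDist T i = d + 1 := ⟨lmsDist T i - 1, by omega⟩
  exact ⟨d, hd, (isLMS_conj_iff hT.1 hi d).1 (hd ▸ hlms)⟩

theorem lmsDist_le_of_seqLType_seqSType {T : List α} (hT : T ≠ []) {i d : ℕ} (hi : 1 ≤ i)
    (h : SeqLType (omegaSeq (conj T i) (conj_ne_nil hT i)) d ∧
      SeqSType (omegaSeq (conj T i) (conj_ne_nil hT i)) (d + 1)) :
    lmsDist T i ≤ d + 1 :=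
  Nat.sInf_le ⟨d.succ_pos, (isLMS_conj_iff hT hi d).2 h⟩

theorem lmsDist_le_length {T : List α} (hT : IsPrimitiveStr T) (hT2 : 2 ≤ T.length) {i : ℕ}
    (hi : 1 ≤ i) : lmsDist T i ≤ T.length := by
  obtain ⟨m, hm, hlms⟩ := exists_isLMS hT hT2 hi
  -- LMS positions recur with period `|T|`, so one occurs within distance `|T|`
  have hred : (i + ((m - 1) % T.length + 1) - 1) % T.length = (i + m - 1) % T.length := by
    rw [show i + ((m - 1) % T.length + 1) - 1 = i + (m - 1) % T.length by omega, Nat.add_mod_mod,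
      show i + (m - 1) = i + m - 1 by omega]
  have := Nat.mod_lt (m - 1) (by omega : 0 < T.length)
  have : lmsDist T i ≤ (m - 1) % T.length + 1 :=
    Nat.sInf_le ⟨by omega, by rwa [hred]⟩
  omega

theorem getElem_lmsPrefix {T : List α} (hT : T ≠ []) (i k : ℕ)
    (hk : k < (lmsPrefix T i).length) :
    (lmsPrefix T i)[k] = omegaSeq (conj T i) (conj_ne_nil hT i) k :=
  getElem_take_append_self _ hk

theorem length_lmsPrefix {T : List α} (hT : IsPrimitiveStr T) (hT2 : 2 ≤ T.length) {i : ℕ}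
    (hi : 1 ≤ i) : (lmsPrefix T i).length = lmsDist T i + 1 := by
  have := lmsDist_le_length hT hT2 hi
  simp [lmsPrefix, conj]
  omega

end LMS

theorem omegaLt_of_lmsLt_general {α : Type*} [LinearOrder α] (A B : List α)
    (hA : IsPrimitiveStr A) (hB : IsPrimitiveStr B)
    (hA2 : 2 ≤ A.length) (hB2 : 2 ≤ B.length)
    (i j : ℕ) (hi1 : 1 ≤ i) (hj1 : 1 ≤ j)
    (h : LMSLt (lmsPrefix A i) (lmsPrefix B j)) :
    OmegaLt (conj A i) (conj B j) := by
  refine ⟨conj_ne_nil hA.1 i, conj_ne_nil hB.1 j, Or.inr (seqLexLt_iff_toLex_lt.2 ?_)⟩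
  have hU := getElem_lmsPrefix hA.1 i
  have hV := getElem_lmsPrefix hB.1 j
  rcases h with ⟨hVU, hVU_ne⟩ | ⟨hUV, -, hlex⟩
  · obtain ⟨d, hdB, hg⟩ := exists_lmsDist_eq_succ hB hB2 hj1
    have hVU_len : (lmsPrefix B j).length < (lmsPrefix A i).length :=
      hVU.length_le.lt_of_ne fun hlen => hVU_ne (hVU.eq_of_length hlen)
    have hV_len := length_lmsPrefix hB hB2 hj1
    have hU_len : (lmsPrefix A i).length ≤ lmsDist A i + 1 := List.length_take_le _ _
    refine toLex_lt_of_lms (fun t ht => ?_) hg (fun hf => ?_)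
      (hA.seqShift_omegaSeq_conj_ne hA2 i (d + 1))
    · rw [← hU t (by omega), ← hV t (by omega)]
      exact (hVU.getElem (by omega)).symm
    · have := lmsDist_le_of_seqLType_seqSType hA.1 hi1 hf
      omega
  · exact toLex_lt_of_lt_of_not_prefix hU hV hlex hUV

/-- For primitive strings `A`, `B` of length `≥ 2`, positions
`1 ≤ i ≤ |A|`, `1 ≤ j ≤ |B|`, with `U`, `V` the LMS-prefixes of `conj_i(A)`,
`conj_j(B)`: if `U <_LMS V` then `conj_i(A) ≺_ω conj_j(B)`. -/
theorem omegaLt_of_lmsLt {α : Type*} [LinearOrder α] (A B : List α)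
    (hA : IsPrimitiveStr A) (hB : IsPrimitiveStr B)
    (hA2 : 2 ≤ A.length) (hB2 : 2 ≤ B.length)
    (i j : ℕ) (hi1 : 1 ≤ i) (hi2 : i ≤ A.length) (hj1 : 1 ≤ j) (hj2 : j ≤ B.length)
    (h : LMSLt (lmsPrefix A i) (lmsPrefix B j)) :
    OmegaLt (conj A i) (conj B j) :=
  omegaLt_of_lmsLt_general A B hA hB hA2 hB2 i j hi1 hj1 h
end
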